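/- arXiv:1811.06392 — 2 statements merged into one kernel-verified Lean document; each statement's English description precedes it below -/
import Mathlib

section
/- Let A : ℕ → ℕ be defined by A(0) = 1, A(1) = 2, and A(n) = 1 + C(A(n−2)+1, 2) + A(n−2)·(A(n−1) − A(n−2)) for n ≥ 2. Then for all n ≥ 3, one has A(n) ≤ A(n−1)·A(n−2). -/
def A : ℕ → ℕ
  | 0 => 1
  | 1 => 2
  | n + 2 => 1 + Nat.choose (A n + 1) 2 + A n * (A (n + 1) - A n)

/-! With `a = A (n - 2) ≤ b = A (n - 1)`, the recurrence reads `A n = 1 + a(a+1)/2 + a(b - a)`,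
so `a b - A n = a² - 1 - a(a+1)/2 = (a - 2)(a + 1)/2`, which is nonnegative as soon as `a ≥ 2`.
The sequence is strictly increasing from `A 1 = 2`, so this holds for all `n ≥ 3`. -/

namespace Nat

lemma lt_one_add_choose_two_add_mul_sub {a : ℕ} (ha : 1 ≤ a) (b : ℕ) :
    b < 1 + (a + 1).choose 2 + a * (b - a) := by
  have h_choose : a ≤ (a + 1).choose 2 := by
    rw [Nat.choose_succ_succ', Nat.choose_one_right]
    exact Nat.le_add_right a _
  have h_mul : b - a ≤ a * (b - a) := Nat.le_mul_of_pos_left _ ha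
  omega

lemma one_add_choose_two_add_mul_sub_le_mul {a b : ℕ} (ha : 2 ≤ a) (hab : a ≤ b) :
    1 + (a + 1).choose 2 + a * (b - a) ≤ b * a := by
  have h_choose : (a + 1).choose 2 * 2 = (a + 1) * a := by
    simpa only [Nat.choose_one_right, Nat.add_sub_cancel] using Nat.choose_succ_right_eq (a + 1) 1
  obtain ⟨d, rfl⟩ := Nat.exists_eq_add_of_le hab
  rw [Nat.add_sub_cancel_left]
  nlinarith

end Nat

lemma A_add_two (n : ℕ) : A (n + 2) = 1 + (A n + 1).choose 2 + A n * (A (n + 1) - A n) := rfl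

lemma one_le_A (n : ℕ) : 1 ≤ A n := by
  match n with
  | 0 => simp [A]
  | 1 => simp [A]
  | n + 2 => rw [A_add_two]; omega

lemma A_strictMono : StrictMono A := by
  refine strictMono_nat_of_lt_succ fun n => ?_
  match n with
  | 0 => simp [A]
  | n + 1 => exact A_add_two n ▸ Nat.lt_one_add_choose_two_add_mul_sub (one_le_A n) _

lemma two_le_A_succ (n : ℕ) : 2 ≤ A (n + 1) :=
  A_strictMono.monotone (Nat.le_add_left 1 n)

theorem stmt_3 : ∀ n : ℕ, 3 ≤ n → A n ≤ A (n - 1) * A (n - 2) := by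
  intro n hn
  obtain ⟨m, rfl⟩ : ∃ m, n = m + 1 + 2 := ⟨n - 3, by omega⟩
  rw [A_add_two, show m + 1 + 2 - 1 = m + 1 + 1 by rfl, show m + 1 + 2 - 2 = m + 1 by rfl]
  exact Nat.one_add_choose_two_add_mul_sub_le_mul (two_le_A_succ m)
    (A_strictMono.monotone (Nat.le_succ _))
end

section
/- Let A : ℕ → ℕ be defined by A(0) = 1, A(1) = 2, and A(n) = 1 + C(A(n−2)+1, 2) + A(n−2)·(A(n−1) − A(n−2)) for n ≥ 2, and let φ = (1+√5)/2. Then (log(log A(n)))/n tends to log φ as n → ∞, i.e., A(n) grows doubly exponentially in n with inner base the golden ratio. -/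
/-!
Without truncated subtraction the recurrence reads `2 A(n+2) + A(n)² = 2 + A(n) + 2 A(n) A(n+1)`,
which gives `A(n) A(n+1) ≤ 2 A(n+2) ≤ 4 A(n) A(n+1)`. Hence `log A(n)` satisfies the Fibonacci
recurrence up to a bounded error, and comparison with `fib` traps it between two constant
multiples of `fib n`, which itself lies between two constant multiples of `φ ^ n`. Constant
factors inside a logarithm vanish after dividing by `n`, so applying this twice gives the limit.
-/

open Filter

noncomputable def φ : ℝ := (1 + Real.sqrt 5) / 2

open Real Topology

theorem le_of_le_add_of_add_le {α : Type*} [AddCommMonoid α] [PartialOrder α]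
    [IsOrderedAddMonoid α] {u v : ℕ → α} {k : ℕ}
    (hu : ∀ n ≥ k, u (n + 2) ≤ u n + u (n + 1)) (hv : ∀ n ≥ k, v n + v (n + 1) ≤ v (n + 2))
    (h₀ : u k ≤ v k) (h₁ : u (k + 1) ≤ v (k + 1)) : ∀ n ≥ k, u n ≤ v n := by
  have pair : ∀ m, u (k + m) ≤ v (k + m) ∧ u (k + m + 1) ≤ v (k + m + 1) := by
    intro m
    induction m with
    | zero => exact ⟨h₀, h₁⟩
    | succ m ih =>
      refine ⟨ih.2, ?_⟩
      calc u (k + (m + 1) + 1) = u (k + m + 2) := rfl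
        _ ≤ u (k + m) + u (k + m + 1) := hu _ (by omega)
        _ ≤ v (k + m) + v (k + m + 1) := add_le_add ih.1 ih.2
        _ ≤ v (k + m + 2) := hv _ (by omega)
  intro n hn
  obtain ⟨m, rfl⟩ := Nat.exists_eq_add_of_le hn
  exact (pair m).1

theorem tendsto_log_div_of_le_mul_of_le_mul {f g : ℕ → ℝ} {a b ℓ : ℝ} (ha : 0 < a)
    (hg : ∀ᶠ n in atTop, 0 < g n) (hlow : ∀ᶠ n in atTop, a * g n ≤ f n)
    (hup : ∀ᶠ n in atTop, f n ≤ b * g n)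
    (hlim : Tendsto (fun n => log (g n) / n) atTop (𝓝 ℓ)) :
    Tendsto (fun n => log (f n) / n) atTop (𝓝 ℓ) := by
  have hshift (c : ℝ) : Tendsto (fun n : ℕ => c / n + log (g n) / n) atTop (𝓝 ℓ) := by
    simpa using (tendsto_const_div_atTop_nhds_zero_nat c).add hlim
  refine tendsto_of_tendsto_of_tendsto_of_le_of_le' (hshift (log a)) (hshift (log b)) ?_ ?_
  all_goals
    filter_upwards [hg, hlow, hup] with n hgn hlown hupn
    have hb : 0 < b := pos_of_mul_pos_left ((mul_pos ha hgn).trans_le (hlown.trans hupn)) hgn.le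
    rw [← add_div]
    gcongr
  · rw [← log_mul ha.ne' hgn.ne']
    exact log_le_log (by positivity) hlown
  · rw [← log_mul hb.ne' hgn.ne']
    exact log_le_log ((mul_pos ha hgn).trans_le hlown) hupn

theorem fib_le_goldenRatio_pow (n : ℕ) : (Nat.fib n : ℝ) ≤ goldenRatio ^ n := by
  cases n with
  | zero => simp
  | succ n =>
    have hbinet := goldenRatio_mul_fib_succ_add_fib n
    have hfib : goldenRatio * Nat.fib (n + 1) ≤ goldenRatio * goldenRatio ^ n := by
      rw [← pow_succ']
      linarith [(Nat.fib n).cast_nonneg (α := ℝ)]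
    calc (Nat.fib (n + 1) : ℝ) ≤ goldenRatio ^ n := le_of_mul_le_mul_left hfib goldenRatio_pos
      _ ≤ goldenRatio ^ (n + 1) := pow_le_pow_right₀ one_lt_goldenRatio.le n.le_succ

theorem goldenRatio_pow_le_sq_mul_fib {n : ℕ} (hn : 1 ≤ n) :
    goldenRatio ^ n ≤ goldenRatio ^ 2 * Nat.fib n := by
  obtain ⟨m, rfl⟩ := Nat.exists_eq_add_of_le' hn
  have hmono : (Nat.fib m : ℝ) ≤ Nat.fib (m + 1) := by exact_mod_cast Nat.fib_le_fib_succ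
  rw [← goldenRatio_mul_fib_succ_add_fib, goldenRatio_sq]
  linarith

theorem tendsto_log_fib_div_atTop :
    Tendsto (fun n => log (Nat.fib n) / n) atTop (𝓝 (log goldenRatio)) := by
  have hpow : Tendsto (fun n : ℕ => log (goldenRatio ^ n) / n) atTop (𝓝 (log goldenRatio)) := by
    refine tendsto_const_nhds.congr' ?_
    filter_upwards [eventually_ne_atTop 0] with n hn
    rw [log_pow, mul_div_cancel_left₀ _ (Nat.cast_ne_zero.2 hn)]
  refine tendsto_log_div_of_le_mul_of_le_mul (a := (goldenRatio ^ 2)⁻¹) (b := 1) (by positivity)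
    (.of_forall fun n => by positivity) ?_
    (.of_forall fun n => by simpa using fib_le_goldenRatio_pow n) hpow
  filter_upwards [eventually_ge_atTop 1] with n hn
  rw [inv_mul_le_iff₀ (by positivity)]
  exact goldenRatio_pow_le_sq_mul_fib hn

theorem A_pos (n : ℕ) : 0 < A n := by
  match n with
  | 0 | 1 => decide
  | n + 2 => simp only [A]; omega

theorem add_one_choose_two_mul_two (m : ℕ) : Nat.choose (m + 1) 2 * 2 = (m + 1) * m := by
  simpa using (Nat.add_one_mul_choose_eq m 1).symm

theorem A_lt_succ (n : ℕ) : A n < A (n + 1) := by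
  induction n with
  | zero => decide
  | succ n ih =>
    have hchoose := add_one_choose_two_mul_two (A n)
    have hmul : A (n + 1) - A n ≤ A n * (A (n + 1) - A n) := Nat.le_mul_of_pos_left _ (A_pos n)
    have hchoose_ge : A n ≤ Nat.choose (A n + 1) 2 := by nlinarith [A_pos n]
    show A (n + 1) < 1 + Nat.choose (A n + 1) 2 + A n * (A (n + 1) - A n)
    omega

theorem two_mul_A_add_two_add_sq (n : ℕ) :
    2 * A (n + 2) + A n ^ 2 = 2 + A n + 2 * (A n * A (n + 1)) := by
  have hrec : A (n + 2) = 1 + Nat.choose (A n + 1) 2 + A n * (A (n + 1) - A n) := rfl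
  have hchoose := add_one_choose_two_mul_two (A n)
  zify [(A_lt_succ n).le] at hrec hchoose ⊢
  linear_combination 2 * hrec + hchoose

theorem A_mul_A_succ_le_two_mul_A_add_two (n : ℕ) : A n * A (n + 1) ≤ 2 * A (n + 2) := by
  have hrec := two_mul_A_add_two_add_sq n
  have hsq : A n ^ 2 ≤ A n * A (n + 1) := by
    rw [sq]
    exact Nat.mul_le_mul_left _ (A_lt_succ n).le
  omega

theorem A_add_two_le_two_mul_A_mul_A_succ (n : ℕ) : A (n + 2) ≤ 2 * (A n * A (n + 1)) := by
  have hrec := two_mul_A_add_two_add_sq n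
  have hsq : A n ≤ A n ^ 2 := by
    rw [sq]
    exact Nat.le_mul_self _
  have hprod : 1 ≤ A n * A (n + 1) := Nat.mul_pos (A_pos n) (A_pos _)
  omega

theorem A_cast_ne_zero (n : ℕ) : (A n : ℝ) ≠ 0 :=
  Nat.cast_ne_zero.2 (A_pos n).ne'

theorem log_A_sub_log_two_ge {n : ℕ} (hn : 2 ≤ n) :
    log (3 / 2) * Nat.fib n ≤ log (A n) - log 2 := by
  refine le_of_le_add_of_add_le (u := fun n => log (3 / 2) * Nat.fib n)
    (v := fun n => log (A n) - log 2)
    (fun n _ => le_of_eq ?_) (fun n _ => ?_) ?_ ?_ n hn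
  · simp only [Nat.fib_add_two, Nat.cast_add]
    ring
  · have h := log_le_log (by simp [A_pos])
      (Nat.cast_le (α := ℝ).2 (A_mul_A_succ_le_two_mul_A_add_two n))
    push_cast at h
    rw [log_mul (A_cast_ne_zero _) (A_cast_ne_zero _), log_mul two_ne_zero (A_cast_ne_zero _)] at h
    linarith
  · simp [A, ← log_div]
  · have h : log ((3 / 2) ^ 2) ≤ log 3 := log_le_log (by norm_num) (by norm_num)
    rw [log_pow, Nat.cast_ofNat] at h
    norm_num [A, Nat.fib_add_two, ← log_div]
    linarith

theorem log_A_add_log_two_le {n : ℕ} (hn : 1 ≤ n) :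
    log (A n) + log 2 ≤ log 6 * Nat.fib n := by
  refine le_of_le_add_of_add_le (u := fun n => log (A n) + log 2)
    (v := fun n => log 6 * Nat.fib n)
    (fun n _ => ?_) (fun n _ => le_of_eq ?_) ?_ ?_ n hn
  · have h := log_le_log (by simp [A_pos])
      (Nat.cast_le (α := ℝ).2 (A_add_two_le_two_mul_A_mul_A_succ n))
    push_cast at h
    rw [log_mul two_ne_zero (mul_ne_zero (A_cast_ne_zero _) (A_cast_ne_zero _)),
      log_mul (A_cast_ne_zero _) (A_cast_ne_zero _)] at h
    linarith
  · simp only [Nat.fib_add_two, Nat.cast_add]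
    ring
  · simpa [A, ← log_mul] using log_le_log (by norm_num) (by norm_num : (2 * 2 : ℝ) ≤ 6)
  · simp [A, ← log_mul]
    norm_num

theorem stmt_12 :
    Tendsto (fun n : ℕ => Real.log (Real.log (A n)) / n) atTop
      (nhds (Real.log φ)) := by
  have hlog : 0 < log (3 / 2) := log_pos (by norm_num)
  refine tendsto_log_div_of_le_mul_of_le_mul (b := log 6) hlog ?_ ?_ ?_ tendsto_log_fib_div_atTop
  · filter_upwards [eventually_ge_atTop 1] with n hn
    exact_mod_cast Nat.fib_pos.2 hn
  · filter_upwards [eventually_ge_atTop 2] with n hn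
    linarith [log_A_sub_log_two_ge hn, log_nonneg (one_le_two (α := ℝ))]
  · filter_upwards [eventually_ge_atTop 1] with n hn
    linarith [log_A_add_log_two_le hn, log_nonneg (one_le_two (α := ℝ))]
end
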